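/- Let γ ≥ (1/4) n^{−1/ρ} 3^{−(2n+1)d/ρ} κ^{1/ρ} L₀^{−(2p^{(n)}+(2n+1)d)/ρ} and τ_n > (2p^{(n)}+(2n+1)d)/ρ. There exists L̄₀* = L̄₀*(n,d,κ,ρ,M,r₀,s₀^{(n)},r_n) such that if L₀ ≥ L̄₀*, there is ḡ₀* = ḡ₀*(n,d,M,r₀,s₀^{(n)},γ) so that for |g| > ḡ₀*, if the cube Λ_{L₀}^{(n)}(u) is (E,γ)-Good, then it is (E,1/2)-NS. -/

import Mathlib

/-!
On an `(E,γ)`-good cube the potential part of `H_Λ - E` is a diagonal matrix with entries of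
modulus at least `γ`, while hopping and interaction enter with the factor `g⁻¹` and have entries
bounded uniformly in the position of the cube. For `|g|` large this perturbation is small in the
`ℓ^∞` operator norm compared with `γ`, so the resolvent identity inverts `H_Λ - E` with a Green's
function entrywise `O(|g|⁻¹)`-close to `(V - E)⁻¹`. Its Sobolev norms are then at most
`√(5 C₀) / γ`, and the lower bound on `γ` together with `τ > (2p⁽ⁿ⁾ + (2n+1)d)/ρ` makes this at
most `L₀^τ` once `L₀` is large.
-/

open MeasureTheory ProbabilityTheory

namespace MP

/-- A point of the single-particle lattice `ℤ^d`. -/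
abbrev Pt (d : ℕ) := Fin d → ℤ

/-- A configuration of `n` particles in `ℤ^d`, i.e. a point of `ℤ^{nd}`. -/
abbrev Cfg (n d : ℕ) := Fin n → Pt d

/-- The max-norm `‖x‖ = max_i |x_i|` on `ℤ^d`. -/
def ptNorm {d : ℕ} (x : Pt d) : ℕ := Finset.univ.sup fun i => (x i).natAbs

/-- The max-norm `‖x‖ = max_j ‖x_j‖` on `ℤ^{nd}`. -/
def cfgNorm {n d : ℕ} (x : Cfg n d) : ℕ := Finset.univ.sup fun j => ptNorm (x j)

/-- `⟨x⟩ = max {1, ‖x‖}`. -/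
def jap {n d : ℕ} (x : Cfg n d) : ℕ := max 1 (cfgNorm x)

/-- The `n`-particle cube of radius `L` centered at `u`. -/
noncomputable def cube {n d : ℕ} (L : ℕ) (u : Cfg n d) : Finset (Cfg n d) :=
  Finset.Icc (fun j i => u j i - (L : ℤ)) (fun j i => u j i + (L : ℤ))

/-- Partial projection `Π_J Λ = ∪_{j∈J} Π_j Λ ⊆ ℤ^d`. -/
def projJ {n d : ℕ} (J : Finset (Fin n)) (Λ : Finset (Cfg n d)) : Finset (Pt d) :=
  J.biUnion fun j => Λ.image fun x => x j

/-- Full projection `ΠΛ = ∪_{j=1}^n Π_j Λ ⊆ ℤ^d`. -/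
def projFull {n d : ℕ} (Λ : Finset (Cfg n d)) : Finset (Pt d) := projJ Finset.univ Λ

/-- Weak separability of the pair of `n`-particle cubes `Λ_L(u)`, `Λ_L(v)`. -/
def WeaklySeparable {n d : ℕ} (r0 L : ℕ) (u v : Cfg n d) : Prop :=
  ∃ J : Finset (Fin n), J.Nonempty ∧
    (projJ J (cube (L + r0) u) ∩
        (projJ Jᶜ (cube (L + r0) u) ∪ projFull (cube (L + r0) v)) = ∅ ∨
      projJ J (cube (L + r0) v) ∩
        (projJ Jᶜ (cube (L + r0) v) ∪ projFull (cube (L + r0) u)) = ∅)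

/-- Separability: weak separability together with `‖u - v‖ > 11 n L`. -/
def Separable {n d : ℕ} (r0 L : ℕ) (u v : Cfg n d) : Prop :=
  WeaklySeparable r0 L u v ∧ 11 * n * L < cfgNorm (u - v)

/-- Complete separability: disjoint full projections of the `(L+r₀)`-cubes. -/
def CompletelySeparable {n d : ℕ} (r0 L : ℕ) (u v : Cfg n d) : Prop :=
  projFull (cube (L + r0) u) ∩ projFull (cube (L + r0) v) = ∅

/-- Distance `dist(u, 𝔻₀) = min_{x ∈ ℤ^d} max_j ‖u_j - x‖` to the diagonal. -/
noncomputable def diagDist {n d : ℕ} (u : Cfg n d) : ℕ :=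
  sInf {m : ℕ | ∃ x : Pt d, ∀ j, ptNorm (u j - x) ≤ m}

/-- Fully interactive cube. -/
def IsFI {n d : ℕ} (r0 L : ℕ) (u : Cfg n d) : Prop := diagDist u ≤ 2 * n * (L + r0)

/-- Partially interactive cube. -/
def IsPI {n d : ℕ} (r0 L : ℕ) (u : Cfg n d) : Prop := ¬ IsFI r0 L u

/-- The power-law long-range hopping kernel (Assumption A):
`T(x,y) = ⟨y_j - x_j⟩^{-r}` if `x_i = y_i` for all `i ≠ j`, and `0` otherwise. -/
noncomputable def hopT {n d : ℕ} (r : ℝ) (x y : Cfg n d) : ℝ :=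
  if h : ∃ j, ∀ i, i ≠ j → x i = y i then
    ((max 1 (ptNorm (y h.choose - x h.choose)) : ℕ) : ℝ) ^ (-r)
  else 0

/-- The total interaction `U(x) = ∑_{j₁ < j₂} U(x_{j₁}, x_{j₂})` (Assumption B). -/
def pairU {n d : ℕ} (U : Pt d → Pt d → ℝ) (x : Cfg n d) : ℝ :=
  ∑ p ∈ Finset.univ.filter (fun p : Fin n × Fin n => p.1 < p.2), U (x p.1) (x p.2)

/-- The `n`-particle Hamiltonian kernel
`H(x,y) = g⁻¹ (T(x,y) + δ_{xy} U(x)) + δ_{xy} ∑_j v(x_j)`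
for a fixed realization `v : ℤ^d → ℝ` of the potential. -/
noncomputable def ham {n d : ℕ} (g r : ℝ) (U : Pt d → Pt d → ℝ) (v : Pt d → ℝ)
    (x y : Cfg n d) : ℝ :=
  (1 / g) * (hopT r x y + if x = y then pairU U x else 0) +
    (if x = y then ∑ j, v (x j) else 0)

/-- `G` is the Green's function `(H_Λ - E)⁻¹` of the restriction of `H` to `Λ`
with Dirichlet boundary conditions. -/
def IsGreen {n d : ℕ} (Λ : Finset (Cfg n d)) (H : Cfg n d → Cfg n d → ℝ) (E : ℝ)
    (G : Cfg n d → Cfg n d → ℝ) : Prop :=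
  (∀ x y, (x ∉ Λ ∨ y ∉ Λ) → G x y = 0) ∧
  (∀ x ∈ Λ, ∀ y ∈ Λ,
    ∑ z ∈ Λ, (H x z - if x = z then E else 0) * G z y = if x = y then 1 else 0) ∧
  (∀ x ∈ Λ, ∀ y ∈ Λ,
    ∑ z ∈ Λ, G x z * (H z y - if z = y then E else 0) = if x = y then 1 else 0)

/-- `E` belongs to the spectrum of `H_Λ`, i.e. `H_Λ - E` is not invertible. -/
def SingE {n d : ℕ} (Λ : Finset (Cfg n d)) (H : Cfg n d → Cfg n d → ℝ) (E : ℝ) : Prop :=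
  ¬ ∃ G, IsGreen Λ H E G

/-- Sobolev norm of a kernel supported on `Λ × Λ`:
`‖K‖_s² = C₀ ∑_{v} (sup_{x-y=v} |K(x,y)|)² ⟨v⟩^{2s}`. -/
noncomputable def sobNorm {n d : ℕ} (C0 : ℝ) (Λ : Finset (Cfg n d))
    (K : Cfg n d → Cfg n d → ℝ) (s : ℝ) : ℝ :=
  Real.sqrt (C0 * ∑ v ∈ (Λ ×ˢ Λ).image (fun p => p.1 - p.2),
    ((((Λ ×ˢ Λ).filter (fun p => p.1 - p.2 = v)).sup
        (fun p => ‖K p.1 p.2‖₊) : NNReal) : ℝ) ^ 2 * ((jap v : ℕ) : ℝ) ^ (2 * s))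

/-- `Λ` (a cube of radius `L`) is `(E,δ)`-nonsingular: the Green's function exists and
`‖G_Λ(E)‖_s ≤ L^{τ + δ s}` for all `s ∈ [s₀, r_n]`. -/
def IsNS {n d : ℕ} (C0 τ δ s0 rn : ℝ) (L : ℕ) (Λ : Finset (Cfg n d))
    (H : Cfg n d → Cfg n d → ℝ) (E : ℝ) : Prop :=
  ∃ G, IsGreen Λ H E G ∧
    ∀ s : ℝ, s0 ≤ s → s ≤ rn → sobNorm C0 Λ G s ≤ (L : ℝ) ^ (τ + δ * s)

/-- `Λ` (a cube of radius `L`) is `E`-resonant: `dist(E, σ(H_Λ)) < L^{-β}`. -/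
def IsER {n d : ℕ} (β : ℝ) (L : ℕ) (Λ : Finset (Cfg n d))
    (H : Cfg n d → Cfg n d → ℝ) (E : ℝ) : Prop :=
  ∃ E' : ℝ, SingE Λ H E' ∧ |E - E'| < (L : ℝ) ^ (-β)

/-- The scales `L_k = L₀^{4^k}`. -/
def Lscale (L0 k : ℕ) : ℕ := L0 ^ (4 ^ k)

/-- `p^{(m)} = 18^{N-m} p₀`. -/
def pexp (N : ℕ) (p0 : ℝ) (m : ℕ) : ℝ := 18 ^ (N - m) * p0

/-- The energy interval `I = [-MN-1, MN+1]`. -/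
def Ibox (M : ℝ) (N : ℕ) : Set ℝ := Set.Icc (-(M * N) - 1) (M * N + 1)

/-- Property `(SS.N.I.k.n)` at scale `Lk`: for every pair of separable `n`-particle
cubes of radius `Lk`, the probability that for some `E ∈ I` both cubes are
`(E,1/2)`-singular is `< Lk^{-2 p^{(n)}}`. -/
def SSprop {d : ℕ} (n : ℕ) {Ω : Type} [MeasurableSpace Ω] (P : Measure Ω)
    (V : Pt d → Ω → ℝ) (g r : ℝ) (U : Pt d → Pt d → ℝ) (C0 : ℝ)
    (τ s0 rn : ℝ) (I : Set ℝ) (r0 Lk : ℕ) (pn : ℝ) : Prop :=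
  ∀ u v : Cfg n d, Separable r0 Lk u v →
    P {ω | ∃ E ∈ I,
        ¬ IsNS C0 τ (1/2) s0 rn Lk (cube Lk u) (ham g r U fun a => V a ω) E ∧
        ¬ IsNS C0 τ (1/2) s0 rn Lk (cube Lk v) (ham g r U fun a => V a ω) E} <
      ENNReal.ofReal ((Lk : ℝ) ^ (-(2 * pn)))

/-- The cube `Λ_{Lk1}(u)` is `(1/2, I)`-tunneling: it contains two separable
`(E,1/2)`-singular cubes of radius `Lk` for some `E ∈ I`. -/
def IsT {n d : ℕ} (C0 τ s0 rn : ℝ) (I : Set ℝ) (g r : ℝ) (U : Pt d → Pt d → ℝ)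
    (v : Pt d → ℝ) (r0 Lk Lk1 : ℕ) (u : Cfg n d) : Prop :=
  ∃ E ∈ I, ∃ x y : Cfg n d,
    cube Lk x ⊆ cube Lk1 u ∧ cube Lk y ⊆ cube Lk1 u ∧ Separable r0 Lk x y ∧
    ¬ IsNS C0 τ (1/2) s0 rn Lk (cube Lk x) (ham g r U v) E ∧
    ¬ IsNS C0 τ (1/2) s0 rn Lk (cube Lk y) (ham g r U v) E

/-- Restriction of a kernel to `Λ × Λ`. -/
def restrictKer {n d : ℕ} (Λ : Finset (Cfg n d)) (K : Cfg n d → Cfg n d → ℝ) :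
    Cfg n d → Cfg n d → ℝ :=
  fun x y => if x ∈ Λ ∧ y ∈ Λ then K x y else 0

/-- Continuity modulus `ς(ε) = sup_t (μ(t+ε] - μ(t])` of the distribution function of `μ`. -/
noncomputable def contMod (μ : Measure ℝ) (ε : ℝ) : ℝ :=
  ⨆ t : ℝ, (μ (Set.Ioc t (t + ε))).toReal

end MP

open scoped NNReal

theorem Finset.coe_sup_nnnorm_le {α : Type*} {s : Finset α} {f : α → ℝ} {b : ℝ} (hb : 0 ≤ b)
    (h : ∀ p ∈ s, |f p| ≤ b) : ((s.sup fun p => ‖f p‖₊ : ℝ≥0) : ℝ) ≤ b := by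
  rw [← Real.coe_toNNReal b hb, NNReal.coe_le_coe]
  exact Finset.sup_le fun p hp => (Real.le_toNNReal_iff_coe_le hb).2 (by simpa using h p hp)

theorem Units.norm_inv_add_sub_inv_le {R : Type*} [NormedRing R] [HasSummableGeomSeries R]
    (a : Rˣ) (b : R) (hb : ‖(↑a⁻¹ : R)‖ * ‖b‖ ≤ 1 / 2) :
    ∃ c : Rˣ, (c : R) = a + b ∧ ‖(↑c⁻¹ : R) - ↑a⁻¹‖ ≤ 2 * ‖(↑a⁻¹ : R)‖ ^ 2 * ‖b‖ := by
  nontriviality R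
  have ha : 0 < ‖(↑a⁻¹ : R)‖ := Units.norm_pos a⁻¹
  have hb' : ‖b‖ < ‖(↑a⁻¹ : R)‖⁻¹ := by
    rw [← mul_one ‖(↑a⁻¹ : R)‖⁻¹, lt_inv_mul_iff₀ ha]; linarith
  refine ⟨a.add b hb', rfl, ?_⟩
  set x : R := ↑(a.add b hb')⁻¹
  have resolvent : x - ↑a⁻¹ = -(x * b * ↑a⁻¹) := by
    have h : x * (a + b) = 1 := by rw [← Units.val_add a b hb']; exact Units.inv_mul _
    calc x - ↑a⁻¹ = (x * (a + b) - x * b) * ↑a⁻¹ - ↑a⁻¹ := by simp [mul_add, mul_assoc]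
      _ = _ := by rw [h]; noncomm_ring
  have hx : ‖x‖ ≤ 2 * ‖(↑a⁻¹ : R)‖ := by
    have h1 := norm_sub_norm_le x (↑a⁻¹ : R)
    have h2 : ‖x * b * ↑a⁻¹‖ ≤ ‖x‖ * (‖(↑a⁻¹ : R)‖ * ‖b‖) :=
      norm_mul₃_le.trans_eq (by ring)
    rw [resolvent, norm_neg] at h1
    nlinarith [norm_nonneg x]
  rw [resolvent, norm_neg]
  calc ‖x * b * ↑a⁻¹‖ ≤ ‖x‖ * ‖b‖ * ‖(↑a⁻¹ : R)‖ := norm_mul₃_le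
    _ ≤ 2 * ‖(↑a⁻¹ : R)‖ * ‖b‖ * ‖(↑a⁻¹ : R)‖ := by gcongr
    _ = _ := by ring

namespace Matrix

attribute [local instance] Matrix.linftyOpSeminormedAddCommGroup

variable {m n α : Type*} [Fintype m] [Fintype n] [SeminormedAddCommGroup α]

theorem norm_entry_le_linfty_opNorm (A : Matrix m n α) (i : m) (j : n) : ‖A i j‖ ≤ ‖A‖ :=
  (PiLp.norm_apply_le (WithLp.toLp 1 (A i)) j).trans
    (norm_le_pi_norm (fun i => WithLp.toLp 1 (A i)) i)

theorem linfty_opNorm_le_card_mul {A : Matrix m n α} {η : ℝ} (hη : 0 ≤ η)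
    (h : ∀ i j, ‖A i j‖ ≤ η) : ‖A‖ ≤ Fintype.card n * η := by
  change ‖fun i => WithLp.toLp 1 (A i)‖ ≤ _
  refine (pi_norm_le_iff_of_nonneg (by positivity)).2 fun i => ?_
  rw [PiLp.norm_eq_of_L1]
  calc ∑ j, ‖A i j‖ ≤ ∑ _j : n, η := Finset.sum_le_sum fun j _ => h i j
    _ = _ := by simp

end Matrix

namespace MP

open Finset

section Hamiltonian

variable {n d : ℕ}

/-- The `g`-independent part `H⁰ + U` of the Hamiltonian, so that `H = g⁻¹ (H⁰ + U) + V`. -/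
noncomputable def hopInt (r : ℝ) (U : Pt d → Pt d → ℝ) (x y : Cfg n d) : ℝ :=
  hopT r x y + if x = y then pairU U x else 0

theorem ham_sub_diag (g r E : ℝ) (U : Pt d → Pt d → ℝ) (v : Pt d → ℝ) (x y : Cfg n d) :
    ham g r U v x y - (if x = y then E else 0) =
      (if x = y then ∑ j, v (x j) - E else 0) + 1 / g * hopInt r U x y := by
  unfold ham hopInt
  split_ifs <;> ring

theorem abs_hopT_le_one {r : ℝ} (hr : 0 ≤ r) (x y : Cfg n d) : |hopT r x y| ≤ 1 := by
  unfold hopT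
  split
  · rw [abs_of_nonneg (by positivity)]
    exact Real.rpow_le_one_of_one_le_of_nonpos (mod_cast le_max_left _ _) (neg_nonpos.2 hr)
  · simp

theorem abs_pairU_le {U : Pt d → Pt d → ℝ} {M1 : ℝ} (hU : ∀ x x', |U x x'| ≤ M1) (x : Cfg n d) :
    |pairU U x| ≤ n ^ 2 * M1 := by
  have hM1 : 0 ≤ M1 := (abs_nonneg _).trans (hU 0 0)
  set pairs := univ.filter fun p : Fin n × Fin n => p.1 < p.2
  have hcard : (#pairs : ℝ) ≤ n ^ 2 := by
    have : #pairs ≤ n ^ 2 := (card_filter_le _ _).trans_eq (by simp [sq])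
    exact_mod_cast this
  calc |pairU U x| ≤ ∑ p ∈ pairs, |U (x p.1) (x p.2)| := abs_sum_le_sum_abs _ _
    _ ≤ #pairs * M1 := by
        simpa using sum_le_card_nsmul pairs _ M1 fun p _ => hU _ _
    _ ≤ n ^ 2 * M1 := by gcongr

theorem abs_hopInt_le {r : ℝ} (hr : 0 ≤ r) {U : Pt d → Pt d → ℝ} {M1 : ℝ}
    (hU : ∀ x x', |U x x'| ≤ M1) (x y : Cfg n d) : |hopInt r U x y| ≤ 1 + n ^ 2 * M1 := by
  have hM1 : 0 ≤ M1 := (abs_nonneg _).trans (hU 0 0)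
  refine (abs_add_le _ _).trans (add_le_add (abs_hopT_le_one hr x y) ?_)
  split
  · exact abs_pairU_le hU x
  · rw [abs_zero]; positivity

end Hamiltonian

section Cube

variable {n d : ℕ}

theorem mem_cube_self (L : ℕ) (u : Cfg n d) : u ∈ cube L u := by
  simp [cube, Pi.le_def]

theorem card_cube (L : ℕ) (u : Cfg n d) : #(cube L u) = (2 * L + 1) ^ (n * d) := by
  have hside (a : ℤ) : (a + L + 1 - (a - L)).toNat = 2 * L + 1 := by omega
  simp only [cube, Pi.card_Icc, Int.card_Icc, hside, prod_const, card_univ, Fintype.card_fin]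
  rw [← pow_mul, Nat.mul_comm d n]

theorem jap_sub_le_of_mem_cube {L : ℕ} {u x y : Cfg n d} (hx : x ∈ cube L u)
    (hy : y ∈ cube L u) : jap (x - y) ≤ 2 * L + 1 := by
  simp only [cube, mem_Icc, Pi.le_def] at hx hy
  refine max_le (by omega) (Finset.sup_le fun j _ => Finset.sup_le fun i _ => ?_)
  have := hx.1 j i; have := hx.2 j i; have := hy.1 j i; have := hy.2 j i
  simp only [Pi.sub_apply]
  omega

end Cube

section Green

variable {n d : ℕ} {Λ : Finset (Cfg n d)} {H : Cfg n d → Cfg n d → ℝ} {E : ℝ}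

/-- The matrix of `H_Λ - E`, indexed by the points of `Λ`. -/
def shiftedMatrix (Λ : Finset (Cfg n d)) (H : Cfg n d → Cfg n d → ℝ) (E : ℝ) : Matrix Λ Λ ℝ :=
  Matrix.of fun x y => H x y - if (x : Cfg n d) = y then E else 0

def extendKer (Λ : Finset (Cfg n d)) (Y : Matrix Λ Λ ℝ) (x y : Cfg n d) : ℝ :=
  if h : x ∈ Λ ∧ y ∈ Λ then Y ⟨x, h.1⟩ ⟨y, h.2⟩ else 0

theorem isGreen_extendKer (c : (Matrix Λ Λ ℝ)ˣ) (hc : (c : Matrix Λ Λ ℝ) = shiftedMatrix Λ H E) :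
    IsGreen Λ H E (extendKer Λ ↑c⁻¹) := by
  refine ⟨fun x y hxy => dif_neg (by tauto), fun x hx y hy => ?_, fun x hx y hy => ?_⟩
  · have := congr_fun (congr_fun c.mul_inv ⟨x, hx⟩) ⟨y, hy⟩
    simp only [hc, Matrix.mul_apply, Matrix.one_apply, Subtype.mk.injEq] at this
    rw [← sum_attach Λ, ← univ_eq_attach, ← this]
    refine Fintype.sum_congr _ _ fun z => ?_
    simp only [extendKer, dif_pos (And.intro z.2 hy), shiftedMatrix, Matrix.of_apply]
  · have := congr_fun (congr_fun c.inv_mul ⟨x, hx⟩) ⟨y, hy⟩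
    simp only [hc, Matrix.mul_apply, Matrix.one_apply, Subtype.mk.injEq] at this
    rw [← sum_attach Λ, ← univ_eq_attach, ← this]
    refine Fintype.sum_congr _ _ fun z => ?_
    simp only [extendKer, dif_pos (And.intro hx z.2), shiftedMatrix, Matrix.of_apply]

section DiagonalDominance

attribute [local instance] Matrix.linftyOpNormedRing Matrix.linftyOpNormedAlgebra

theorem exists_isGreen_of_diag_dominant {D : Cfg n d → ℝ} {A : Cfg n d → Cfg n d → ℝ} {γ η : ℝ}
    (hγ : 0 < γ) (hη : 0 ≤ η) (hD : ∀ x ∈ Λ, γ ≤ |D x|) (hA : ∀ x ∈ Λ, ∀ y ∈ Λ, |A x y| ≤ η)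
    (hH : ∀ x ∈ Λ, ∀ y ∈ Λ,
      H x y - (if x = y then E else 0) = (if x = y then D x else 0) + A x y)
    (hsmall : #Λ * η ≤ γ / 2) :
    ∃ G, IsGreen Λ H E G ∧
      ∀ x ∈ Λ, ∀ y ∈ Λ, |G x y - if x = y then (D x)⁻¹ else 0| ≤ 2 * #Λ * η / γ ^ 2 := by
  set D' : Λ → ℝ := fun x => D x
  have hD' (x : Λ) : D' x ≠ 0 := by
    have := hD x x.2; intro h; simp only [D', h, abs_zero] at this; linarith
  let a : (Matrix Λ Λ ℝ)ˣ := ⟨Matrix.diagonal D', Matrix.diagonal D'⁻¹, by simp [hD'], by simp [hD']⟩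
  have ha : ‖(↑a⁻¹ : Matrix Λ Λ ℝ)‖ ≤ γ⁻¹ := by
    change ‖Matrix.diagonal D'⁻¹‖ ≤ _
    rw [Matrix.linfty_opNorm_diagonal]
    refine (pi_norm_le_iff_of_nonneg (by positivity)).2 fun x => ?_
    rw [Pi.inv_apply, norm_inv, Real.norm_eq_abs]
    exact inv_anti₀ hγ (hD x x.2)
  set B : Matrix Λ Λ ℝ := Matrix.of fun x y => A x y
  have hB : ‖B‖ ≤ #Λ * η := by
    simpa using Matrix.linfty_opNorm_le_card_mul hη fun (x y : Λ) => (hA x x.2 y y.2 :)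
  have hab : ‖(↑a⁻¹ : Matrix Λ Λ ℝ)‖ * ‖B‖ ≤ 1 / 2 :=
    calc ‖(↑a⁻¹ : Matrix Λ Λ ℝ)‖ * ‖B‖ ≤ γ⁻¹ * (γ / 2) := by gcongr; exact hB.trans hsmall
      _ = 1 / 2 := by field_simp
  obtain ⟨c, hc, hinv⟩ := Units.norm_inv_add_sub_inv_le a B hab
  have hcH : (c : Matrix Λ Λ ℝ) = shiftedMatrix Λ H E := by
    ext x y
    rw [hc, shiftedMatrix, Matrix.of_apply, hH x x.2 y y.2]
    change Matrix.diagonal D' x y + A x y = _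
    rw [Matrix.diagonal_apply, if_congr Subtype.ext_iff rfl rfl]
  refine ⟨extendKer Λ ↑c⁻¹, isGreen_extendKer c hcH, fun x hx y hy => ?_⟩
  calc |extendKer Λ ↑c⁻¹ x y - if x = y then (D x)⁻¹ else 0|
      = ‖(↑c⁻¹ - ↑a⁻¹ : Matrix Λ Λ ℝ) ⟨x, hx⟩ ⟨y, hy⟩‖ := by
        simp [extendKer, hx, hy, a, D', Matrix.diagonal_apply]
    _ ≤ ‖(↑c⁻¹ - ↑a⁻¹ : Matrix Λ Λ ℝ)‖ := Matrix.norm_entry_le_linfty_opNorm _ _ _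
    _ ≤ 2 * ‖(↑a⁻¹ : Matrix Λ Λ ℝ)‖ ^ 2 * ‖B‖ := hinv
    _ ≤ 2 * γ⁻¹ ^ 2 * (#Λ * η) := by gcongr
    _ = 2 * #Λ * η / γ ^ 2 := by field_simp

end DiagonalDominance

end Green

section Sobolev

variable {n d : ℕ}

theorem jap_zero : jap (0 : Cfg n d) = 1 := by
  simp [jap, cfgNorm, ptNorm]

theorem sobNorm_le_of_entry_bounds {C0 : ℝ} {Λ : Finset (Cfg n d)} {G : Cfg n d → Cfg n d → ℝ}
    {s a b K : ℝ} (hC0 : 0 ≤ C0) (hs : 0 ≤ s) (ha : 0 ≤ a) (hb : 0 ≤ b) (hK0 : 0 ≤ K)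
    (hK : ∀ x ∈ Λ, ∀ y ∈ Λ, (jap (x - y) : ℝ) ≤ K)
    (hdiag : ∀ x ∈ Λ, |G x x| ≤ a) (hoff : ∀ x ∈ Λ, ∀ y ∈ Λ, x ≠ y → |G x y| ≤ b) :
    sobNorm C0 Λ G s ≤ √(C0 * (a ^ 2 + #Λ ^ 2 * (b ^ 2 * K ^ (2 * s)))) := by
  unfold sobNorm
  refine Real.sqrt_le_sqrt (mul_le_mul_of_nonneg_left ?_ hC0)
  set diffs := (Λ ×ˢ Λ).image fun p => p.1 - p.2
  have hterm : ∀ w ∈ diffs,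
      ((((Λ ×ˢ Λ).filter fun p => p.1 - p.2 = w).sup fun p => ‖G p.1 p.2‖₊ : ℝ≥0) : ℝ) ^ 2 *
          ((jap w : ℕ) : ℝ) ^ (2 * s) ≤ (if w = 0 then a ^ 2 else 0) + b ^ 2 * K ^ (2 * s) := by
    intro w hw
    obtain ⟨⟨x, y⟩, hxy, rfl⟩ := mem_image.1 hw
    rw [mem_product] at hxy
    by_cases h0 : x - y = 0
    · have hsup := Finset.coe_sup_nnnorm_le ha (s := (Λ ×ˢ Λ).filter fun p => p.1 - p.2 = x - y)
        (f := fun p => G p.1 p.2) fun p hp => by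
          rw [mem_filter, mem_product, h0, sub_eq_zero] at hp
          rw [hp.2]; exact hdiag p.2 hp.1.2
      rw [if_pos h0, h0, jap_zero, Nat.cast_one, Real.one_rpow, mul_one]
      rw [h0] at hsup
      nlinarith [sq_nonneg b, Real.rpow_nonneg hK0 (2 * s)]
    · rw [if_neg h0, zero_add]
      gcongr
      · exact Finset.coe_sup_nnnorm_le hb fun p hp => by
          rw [mem_filter, mem_product] at hp
          exact hoff p.1 hp.1.1 p.2 hp.1.2 fun h => h0 (by rw [← hp.2, h, sub_self])
      · exact hK x hxy.1 y hxy.2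
  have hdiffs : (#diffs : ℝ) ≤ #Λ ^ 2 := by
    have : #diffs ≤ #Λ ^ 2 := card_image_le.trans_eq (by rw [card_product, sq])
    exact_mod_cast this
  calc ∑ w ∈ diffs, _ ≤ ∑ w ∈ diffs, ((if w = 0 then a ^ 2 else 0) + b ^ 2 * K ^ (2 * s)) :=
        sum_le_sum hterm
    _ = (if 0 ∈ diffs then a ^ 2 else 0) + #diffs * (b ^ 2 * K ^ (2 * s)) := by
        rw [sum_add_distrib, sum_ite_eq', sum_const, nsmul_eq_mul]
    _ ≤ a ^ 2 + #Λ ^ 2 * (b ^ 2 * K ^ (2 * s)) := by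
        gcongr
        split_ifs <;> [exact le_rfl; positivity]

end Sobolev

section NonSingular

variable {n d : ℕ} {Λ : Finset (Cfg n d)} {H : Cfg n d → Cfg n d → ℝ} {E : ℝ}

theorem exists_isGreen_sobNorm_le {C0 rn γ η K : ℝ} {D : Cfg n d → ℝ}
    {A : Cfg n d → Cfg n d → ℝ} (hΛ : Λ.Nonempty) (hC0 : 0 ≤ C0) (hrn : 0 ≤ rn) (hγ : 0 < γ)
    (hη : 0 ≤ η) (hK : 1 ≤ K) (hjap : ∀ x ∈ Λ, ∀ y ∈ Λ, (jap (x - y) : ℝ) ≤ K)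
    (hD : ∀ x ∈ Λ, γ ≤ |D x|) (hA : ∀ x ∈ Λ, ∀ y ∈ Λ, |A x y| ≤ η)
    (hH : ∀ x ∈ Λ, ∀ y ∈ Λ,
      H x y - (if x = y then E else 0) = (if x = y then D x else 0) + A x y)
    (hsmall : 2 * #Λ ^ 2 * K ^ rn * η ≤ γ) :
    ∃ G, IsGreen Λ H E G ∧ ∀ s, 0 ≤ s → s ≤ rn → sobNorm C0 Λ G s ≤ √(5 * C0) / γ := by
  set m : ℝ := (#Λ : ℝ)
  have hm : 1 ≤ m := by simpa [m] using hΛ.card_pos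
  have hKrn : 1 ≤ K ^ rn := Real.one_le_rpow hK hrn
  set δ := 2 * m * η / γ ^ 2
  -- `m δ K^rn ≤ 1/γ` is exactly what makes the off-diagonal part of the Sobolev sum harmless
  have hδK : m * δ * K ^ rn ≤ 1 / γ := by
    rw [show m * δ * K ^ rn = (2 * m ^ 2 * K ^ rn * η) / γ / γ by simp only [δ]; field_simp]
    gcongr
    exact (div_le_one hγ).2 hsmall
  have hδ : δ ≤ 1 / γ := by
    have : 0 ≤ δ := by positivity
    calc δ = 1 * δ * 1 := by ring
      _ ≤ m * δ * K ^ rn := by gcongr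
      _ ≤ 1 / γ := hδK
  have hmη : m * η ≤ γ / 2 :=
    calc m * η = 1 * (m * η) * 1 := by ring
      _ ≤ m * (m * η) * K ^ rn := by gcongr
      _ ≤ γ / 2 := by linarith
  obtain ⟨G, hG, hGD⟩ := exists_isGreen_of_diag_dominant hγ hη hD hA hH hmη
  refine ⟨G, hG, fun s hs hsrn => ?_⟩
  have hdiag (x) (hx : x ∈ Λ) : |G x x| ≤ 1 / γ + δ := by
    have hDx : |(D x)⁻¹| ≤ 1 / γ := by rw [abs_inv, one_div]; exact inv_anti₀ hγ (hD x hx)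
    have := hGD x hx x hx
    rw [if_pos rfl] at this
    linarith [abs_sub_abs_le_abs_sub (G x x) (D x)⁻¹]
  have hoff (x) (hx : x ∈ Λ) (y) (hy : y ∈ Λ) (hxy : x ≠ y) : |G x y| ≤ δ := by
    simpa [hxy] using hGD x hx y hy
  have hKs : K ^ (2 * s) ≤ (K ^ rn) ^ 2 := by
    rw [← Real.rpow_natCast, ← Real.rpow_mul (by linarith)]
    exact Real.rpow_le_rpow_of_exponent_le hK (by push_cast; linarith)
  calc sobNorm C0 Λ G s ≤ √(C0 * ((1 / γ + δ) ^ 2 + m ^ 2 * (δ ^ 2 * K ^ (2 * s)))) :=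
        sobNorm_le_of_entry_bounds hC0 hs (by positivity) (by positivity) (by linarith) hjap
          hdiag hoff
    _ ≤ √(C0 * ((1 / γ + 1 / γ) ^ 2 + (m * δ * K ^ rn) ^ 2)) := by
        gcongr
        calc m ^ 2 * (δ ^ 2 * K ^ (2 * s)) ≤ m ^ 2 * (δ ^ 2 * (K ^ rn) ^ 2) := by gcongr
          _ = (m * δ * K ^ rn) ^ 2 := by ring
    _ ≤ √(C0 * ((1 / γ + 1 / γ) ^ 2 + (1 / γ) ^ 2)) := by gcongr
    _ = √(5 * C0 / γ ^ 2) := by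
        congr 1
        field_simp
        ring
    _ = √(5 * C0) / γ := by rw [Real.sqrt_div' _ (sq_nonneg γ), Real.sqrt_sq hγ.le]

end NonSingular

theorem isNS_cube_of_good {n d : ℕ} {U : Pt d → Pt d → ℝ} {v : Pt d → ℝ}
    {M1 C0 r τ s0 rn γ g E : ℝ} {L : ℕ} {u : Cfg n d} (hU : ∀ x x', |U x x'| ≤ M1)
    (hr : 0 ≤ r) (hC0 : 0 ≤ C0) (hs0 : 0 ≤ s0) (hs0rn : s0 ≤ rn) (hγ : 0 < γ) (hL : 1 ≤ L)
    (hγL : √(5 * C0) ≤ γ * (L : ℝ) ^ τ)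
    (hg : 2 * ((2 * L + 1 : ℝ) ^ (n * d)) ^ 2 * (2 * L + 1 : ℝ) ^ rn * (1 + n ^ 2 * M1) / γ < |g|)
    (hgood : ∀ x ∈ cube L u, γ ≤ |∑ j, v (x j) - E|) :
    IsNS C0 τ (1 / 2) s0 rn L (cube L u) (ham g r U v) E := by
  set K : ℝ := 2 * L + 1
  set a : ℝ := 1 + n ^ 2 * M1
  have hM1 : 0 ≤ M1 := (abs_nonneg _).trans (hU 0 0)
  have hK : 1 ≤ K := by simp only [K]; linarith [(Nat.cast_nonneg L : (0 : ℝ) ≤ L)]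
  have hcard : (#(cube L u) : ℝ) = K ^ (n * d) := by simp [card_cube, K]
  have hg0 : 0 < |g| := lt_of_le_of_lt (by positivity) hg
  have hA (x y : Cfg n d) : |1 / g * hopInt r U x y| ≤ a / |g| := by
    rw [abs_mul, abs_div, abs_one, one_div_mul_eq_div]
    gcongr
    exact abs_hopInt_le hr hU x y
  have hsmall : 2 * #(cube L u) ^ 2 * K ^ rn * (a / |g|) ≤ γ := by
    rw [div_lt_iff₀ hγ] at hg
    rw [hcard, ← mul_div_assoc, div_le_iff₀ hg0]
    linarith
  obtain ⟨G, hG, hsob⟩ := exists_isGreen_sobNorm_le ⟨u, mem_cube_self L u⟩ hC0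
    (hs0.trans hs0rn) hγ (by positivity) hK
    (fun x hx y hy => by simpa [K] using (Nat.cast_le (α := ℝ)).2 (jap_sub_le_of_mem_cube hx hy))
    hgood (fun x _ y _ => hA x y) (fun x _ y _ => ham_sub_diag g r E U v x y) hsmall
  refine ⟨G, hG, fun s hs hsrn => (hsob s (hs0.trans hs) hsrn).trans ?_⟩
  calc √(5 * C0) / γ ≤ (L : ℝ) ^ τ := (div_le_iff₀' hγ).2 hγL
    _ ≤ (L : ℝ) ^ (τ + 1 / 2 * s) :=
        Real.rpow_le_rpow_of_exponent_le (by exact_mod_cast hL) (by linarith)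

theorem statement15_general {d N : ℕ}
    (n : ℕ) (hn1 : 1 ≤ n)
    (U : Pt d → Pt d → ℝ) (M M1 : ℝ)
    (hUbdd : ∀ x x', |U x x'| ≤ M1)
    (ρ κ : ℝ) (hκ : 0 < κ)
    (r C0 : ℝ) (hC0 : 0 < C0)
    (p0 : ℝ)
    (τ s0 rn : ℝ)
    (hs0 : (n * d : ℝ) / 2 < s0) (hs0rn : s0 ≤ rn) (hrnr : rn < r - (n * d : ℝ) / 2)
    (hτ : (2 * pexp N p0 n + ((2 * n + 1) * d : ℕ)) / ρ < τ) :
    ∃ L0bar : ℝ, 0 < L0bar ∧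
      ∀ L0 : ℕ, L0bar ≤ (L0 : ℝ) →
        ∀ γ : ℝ,
          1 / 4 * (n : ℝ) ^ (-(1 / ρ)) * (3 : ℝ) ^ (-(((2 * n + 1) * d : ℕ) : ℝ) / ρ) *
              κ ^ (1 / ρ) *
              (L0 : ℝ) ^ (-(2 * pexp N p0 n + ((2 * n + 1) * d : ℕ)) / ρ) ≤ γ →
          ∃ gbar : ℝ, 0 < gbar ∧
            ∀ g : ℝ, gbar < |g| →
              ∀ v : Pt d → ℝ, (∀ a, |v a| ≤ M) →
                ∀ E ∈ Ibox M N, ∀ u : Cfg n d,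
                  (∀ x ∈ cube L0 u, γ < |(∑ j, v (x j)) - E|) →
                  IsNS C0 τ (1/2) s0 rn L0 (cube L0 u) (ham g r U v) E := by
  have hn : (0 : ℝ) < n := by exact_mod_cast hn1
  have hnd : (0 : ℝ) ≤ (n * d : ℝ) / 2 := by positivity
  have hM1 : 0 ≤ M1 := (abs_nonneg _).trans (hUbdd 0 0)
  set β : ℝ := (2 * pexp N p0 n + ((2 * n + 1) * d : ℕ)) / ρ
  set c : ℝ := 1 / 4 * (n : ℝ) ^ (-(1 / ρ)) * (3 : ℝ) ^ (-(((2 * n + 1) * d : ℕ) : ℝ) / ρ) *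
    κ ^ (1 / ρ)
  have hc : 0 < c := by positivity
  have hτβ : 0 < τ - β := sub_pos.2 hτ
  refine ⟨max 1 ((√(5 * C0) / c) ^ (τ - β)⁻¹), by positivity, fun L0 hL0 γ hγ => ?_⟩
  obtain ⟨hL1, hLc⟩ := max_le_iff.1 hL0
  replace hγ : c * (L0 : ℝ) ^ (-β) ≤ γ := by rwa [neg_div] at hγ
  have hγpos : 0 < γ := lt_of_lt_of_le (by positivity) hγ
  have hγL : √(5 * C0) ≤ γ * (L0 : ℝ) ^ τ :=
    calc √(5 * C0) = c * ((√(5 * C0) / c) ^ (τ - β)⁻¹) ^ (τ - β) := by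
          rw [← Real.rpow_mul (by positivity), inv_mul_cancel₀ hτβ.ne', Real.rpow_one]
          field_simp
      _ ≤ c * (L0 : ℝ) ^ (τ - β) := by gcongr
      _ = c * (L0 : ℝ) ^ (-β) * (L0 : ℝ) ^ τ := by
          rw [mul_assoc c, ← Real.rpow_add (by positivity), neg_add_eq_sub]
      _ ≤ γ * (L0 : ℝ) ^ τ := by gcongr
  exact ⟨_, by positivity, fun g hg v _ E _ u hgood =>
    isNS_cube_of_good hUbdd (by linarith) hC0.le (by linarith) hs0rn hγpos
      (by exact_mod_cast hL1) hγL hg fun x hx => (hgood x hx).le⟩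

/-- Lemma 4.2: with `γ ≥ (1/4) n^{-1/ρ} 3^{-(2n+1)d/ρ} κ^{1/ρ}
L₀^{-(2p^{(n)}+(2n+1)d)/ρ}` and `τ_n > (2p^{(n)}+(2n+1)d)/ρ`, there exists `L̄₀*` such
that for `L₀ ≥ L̄₀*` there is `ḡ₀*` so that for `|g| > ḡ₀*`, every `(E,γ)`-Good cube
`Λ_{L₀}(u)` is `(E,1/2)`-NS. -/
theorem statement15 {d N : ℕ} (hd : 1 ≤ d) (hN : 2 ≤ N)
    (n : ℕ) (hn1 : 1 ≤ n) (hnN : n ≤ N)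
    (U : Pt d → Pt d → ℝ) (r0 : ℕ) (hr0 : 1 ≤ r0) (M M1 : ℝ) (hM : 0 < M)
    (hUbdd : ∀ x x', |U x x'| ≤ M1) (hUsym : ∀ x x', U x x' = U x' x)
    (hUfin : ∀ x x', (r0 : ℕ) ≤ ptNorm (x - x') → U x x' = 0)
    (ρ κ : ℝ) (hρ : 0 < ρ) (hκ : 0 < κ)
    (r C0 : ℝ) (hC0 : 0 < C0)
    (p0 : ℝ) (hp0 : 20 * N * d ≤ p0)
    (τ s0 rn : ℝ)
    (hs0 : (n * d : ℝ) / 2 < s0) (hs0rn : s0 ≤ rn) (hrnr : rn < r - (n * d : ℝ) / 2)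
    (hτ : (2 * pexp N p0 n + ((2 * n + 1) * d : ℕ)) / ρ < τ) :
    ∃ L0bar : ℝ, 0 < L0bar ∧
      ∀ L0 : ℕ, L0bar ≤ (L0 : ℝ) →
        ∀ γ : ℝ,
          1 / 4 * (n : ℝ) ^ (-(1 / ρ)) * (3 : ℝ) ^ (-(((2 * n + 1) * d : ℕ) : ℝ) / ρ) *
              κ ^ (1 / ρ) *
              (L0 : ℝ) ^ (-(2 * pexp N p0 n + ((2 * n + 1) * d : ℕ)) / ρ) ≤ γ →
          ∃ gbar : ℝ, 0 < gbar ∧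
            ∀ g : ℝ, gbar < |g| →
              ∀ v : Pt d → ℝ, (∀ a, |v a| ≤ M) →
                ∀ E ∈ Ibox M N, ∀ u : Cfg n d,
                  (∀ x ∈ cube L0 u, γ < |(∑ j, v (x j)) - E|) →
                  IsNS C0 τ (1/2) s0 rn L0 (cube L0 u) (ham g r U v) E :=
  statement15_general n hn1 U M M1 hUbdd ρ κ hκ r C0 hC0 p0 τ s0 rn hs0 hs0rn hrnr hτ

end MP
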